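/- arXiv:2005.03228 — 5 statements merged into one kernel-verified Lean document; each statement's English description precedes it below -/
import Mathlib

section
/- Let J : [0,1] → ℝ be differentiable and strictly convex, and define I₁(v) = J(v) + (1 - v)·J'(v) and I₀(v) = J(v) - v·J'(v). Then for η̂, η ∈ [0,1], equality η·I₁(η̂) + (1 - η)·I₀(η̂) = J(η) holds if and only if η̂ = η. -/
open Set

/-- For differentiable, strictly convex `J` on `[0,1]` with conditional rewards
`I₁ v = J v + (1 - v) * J' v` and `I₀ v = J v - v * J' v`, the total reward
with prediction `v = η̂` equals `J η` if and only if `v = η`. -/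
theorem stmt_2 (J J' : ℝ → ℝ)
    (hderiv : ∀ x ∈ Icc (0:ℝ) 1, HasDerivAt J (J' x) x)
    (hconv : StrictConvexOn ℝ (Icc (0:ℝ) 1) J) :
    ∀ v ∈ Icc (0:ℝ) 1, ∀ η ∈ Icc (0:ℝ) 1,
      (η * (J v + (1 - v) * J' v) + (1 - η) * (J v - v * J' v) = J η ↔ v = η) := by
  intro v hv η hη
  constructor
  · intro heq
    by_contra hne
    have hkey : J v + (η - v) * J' v = J η := by linarith [heq]
    rcases lt_or_gt_of_ne hne with h | h
    · -- v < η : J' v < slope J v η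
      have := hconv.lt_slope_of_hasDerivAt hv hη h (hderiv v hv)
      have hpos : 0 < η - v := by linarith
      rw [show slope J v η = (J η - J v) / (η - v) from slope_def_field J v η,
        lt_div_iff₀ hpos] at this
      nlinarith [hkey]
    · -- η < v : slope J η v < J' v
      have := hconv.slope_lt_of_hasDerivAt hη hv h (hderiv v hv)
      have hpos : 0 < v - η := by linarith
      rw [show slope J η v = (J v - J η) / (v - η) from slope_def_field J η v,
        div_lt_iff₀ hpos] at this
      nlinarith [hkey]
  · rintro rfl
    ring
end

section
/- Let I₁, I₀ : [0,1] → ℝ, set I(η̂, η) = η·I₁(η̂) + (1 - η)·I₀(η̂) and J(η) = I(η, η), and assume that for all η̂, η ∈ [0,1] one has I(η̂, η) ≤ J(η), with equality if and only if η̂ = η. Then J is strictly convex on [0,1]. -/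
open Set

/-- If the total reward `I v η = η * I₁ v + (1 - η) * I₀ v` satisfies
`I v η ≤ J η` for all `v, η ∈ [0,1]`, with equality if and only if `v = η`,
where `J η = I η η`, then the maximum reward function `J` is strictly convex
on `[0,1]`. -/
theorem stmt_4 (I₁ I₀ J : ℝ → ℝ)
    (hJdef : ∀ η : ℝ, J η = η * I₁ η + (1 - η) * I₀ η)
    (hle : ∀ v ∈ Icc (0:ℝ) 1, ∀ η ∈ Icc (0:ℝ) 1,
      η * I₁ v + (1 - η) * I₀ v ≤ J η
        ∧ (η * I₁ v + (1 - η) * I₀ v = J η ↔ v = η)) :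
    StrictConvexOn ℝ (Icc (0:ℝ) 1) J := by
  refine ⟨convex_Icc 0 1, ?_⟩
  intro x hx y hy hxy a b ha hb hab
  have hz : a • x + b • y ∈ Icc (0:ℝ) 1 := (convex_Icc 0 1) hx hy ha.le hb.le hab
  set z := a • x + b • y with hzdef
  have hzx : z ≠ x := by
    simp only [hzdef, smul_eq_mul]
    intro h
    apply hxy
    have : b * (y - x) = 0 := by linear_combination h - x*hab
    rcases mul_eq_zero.1 this with h' | h'
    · exact absurd h' hb.ne'
    · linarith [sub_eq_zero.1 h']
  have hzy : z ≠ y := by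
    simp only [hzdef, smul_eq_mul]
    intro h
    apply hxy
    have : a * (x - y) = 0 := by linear_combination h - y*hab
    rcases mul_eq_zero.1 this with h' | h'
    · exact absurd h' ha.ne'
    · linarith [sub_eq_zero.1 h']
  have h1 : x * I₁ z + (1 - x) * I₀ z < J x := by
    rcases hle z hz x hx with ⟨hle1, heq1⟩
    exact lt_of_le_of_ne hle1 (fun h => hzx (heq1.1 h))
  have h2 : y * I₁ z + (1 - y) * I₀ z < J y := by
    rcases hle z hz y hy with ⟨hle1, heq1⟩
    exact lt_of_le_of_ne hle1 (fun h => hzy (heq1.1 h))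
  have hJz : J z = z * I₁ z + (1 - z) * I₀ z := hJdef z
  have hzval : z = a * x + b * y := by simp [hzdef]
  calc J z = a * (x * I₁ z + (1 - x) * I₀ z) + b * (y * I₁ z + (1 - y) * I₀ z) := by
        rw [hJz, hzval]; linear_combination (-I₀ (a*x+b*y))*hab
    _ < a * J x + b * J y := by nlinarith
    _ = a • J x + b • J y := by simp
end

section
/- Let μₚ ∈ (0,1) and η ∈ (0,1) with η·(1 + μₚ) > μₚ. Then for every η̂ ∈ (0, 1 + μₚ), the PU-learning reward satisfies η·ln(η̂) + (1 - η)·ln(1 - |η̂ - μₚ|) ≤ η·ln(η·(1 + μₚ)) + (1 - η)·ln((1 - η)·(1 + μₚ)), with equality if and only if η̂ = η·(1 + μₚ). In other words, the reward supports the value J(η) = η·ln(η·(1+μₚ)) + (1-η)·ln((1-η)·(1+μₚ)) at and only at η̂ = η·(1 + μₚ). -/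
open Set Real

private lemma aux_le (η a b : ℝ) (hη0 : 0 < η) (hη1 : η < 1)
    (ha : 0 < a) (hb : 0 < b) (hs : η * a + (1 - η) * b ≤ 1) :
    η * Real.log a + (1 - η) * Real.log b ≤ 0 := by
  have h1 := Real.log_le_sub_one_of_pos ha
  have h2 := Real.log_le_sub_one_of_pos hb
  nlinarith

private lemma aux_lt (η a b : ℝ) (hη0 : 0 < η) (hη1 : η < 1)
    (ha : 0 < a) (hb : 0 < b) (hs : η * a + (1 - η) * b ≤ 1) (ha1 : a ≠ 1) :
    η * Real.log a + (1 - η) * Real.log b < 0 := by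
  have h1 := Real.log_lt_sub_one_of_pos ha ha1
  have h2 := Real.log_le_sub_one_of_pos hb
  nlinarith

/-- Maximum reward in PU learning, branch `η * (1 + μₚ) > μₚ`: for every
prediction `v ∈ (0, 1 + μₚ)`, the reward
`η * ln v + (1 - η) * ln (1 - |v - μₚ|)` is at most
`J η = η * ln (η * (1 + μₚ)) + (1 - η) * ln ((1 - η) * (1 + μₚ))`,
with equality if and only if `v = η * (1 + μₚ)`. -/
theorem stmt_10 (μₚ η : ℝ) (hμ : μₚ ∈ Ioo (0:ℝ) 1) (hη : η ∈ Ioo (0:ℝ) 1)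
    (hgt : η * (1 + μₚ) > μₚ) :
    ∀ v ∈ Ioo (0:ℝ) (1 + μₚ),
      η * Real.log v + (1 - η) * Real.log (1 - |v - μₚ|)
        ≤ η * Real.log (η * (1 + μₚ)) + (1 - η) * Real.log ((1 - η) * (1 + μₚ))
      ∧ (η * Real.log v + (1 - η) * Real.log (1 - |v - μₚ|)
          = η * Real.log (η * (1 + μₚ)) + (1 - η) * Real.log ((1 - η) * (1 + μₚ))
          ↔ v = η * (1 + μₚ)) := by
  obtain ⟨hμ0, hμ1⟩ := hμ
  obtain ⟨hη0, hη1⟩ := hη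
  intro v hv
  obtain ⟨hv0, hv1⟩ := hv
  set c : ℝ := 1 + μₚ with hc
  have hcpos : 0 < c := by positivity
  have hwpos : 0 < η * c := by positivity
  have huη : 0 < 1 - η := by linarith
  have hupos : 0 < (1 - η) * c := by positivity
  by_cases hvm : μₚ ≤ v
  · -- case v ≥ μₚ
    have habs : |v - μₚ| = v - μₚ := abs_of_nonneg (by linarith)
    have hcv : 0 < c - v := by linarith
    have hrw : (1 : ℝ) - (v - μₚ) = c - v := by ring
    rw [habs, hrw]
    have ha : (0:ℝ) < v / (η * c) := by positivity
    have hb : (0:ℝ) < (c - v) / ((1 - η) * c) := by positivity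
    have hsum : η * (v / (η * c)) + (1 - η) * ((c - v) / ((1 - η) * c)) = 1 := by
      field_simp
      ring
    have hla : Real.log (v / (η * c)) = Real.log v - Real.log (η * c) :=
      Real.log_div hv0.ne' hwpos.ne'
    have hlb : Real.log ((c - v) / ((1 - η) * c))
        = Real.log (c - v) - Real.log ((1 - η) * c) :=
      Real.log_div hcv.ne' hupos.ne'
    have hle := aux_le η _ _ hη0 hη1 ha hb (le_of_eq hsum)
    rw [hla, hlb] at hle
    constructor
    · linarith
    constructor
    · intro heq
      by_contra hne
      have ha1 : v / (η * c) ≠ 1 := by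
        intro h
        exact hne (by field_simp at h; linarith)
      have hlt := aux_lt η _ _ hη0 hη1 ha hb (le_of_eq hsum) ha1
      rw [hla, hlb] at hlt
      linarith
    · intro heq
      subst heq
      have : c - η * c = (1 - η) * c := by ring
      rw [this]
  · -- case v < μₚ
    push_neg at hvm
    have habs : |v - μₚ| = μₚ - v := by rw [abs_of_nonpos (by linarith : v - μₚ ≤ 0)]; ring
    have hcv : 0 < 1 - μₚ + v := by linarith
    have hrw : (1 : ℝ) - (μₚ - v) = 1 - μₚ + v := by ring
    rw [habs, hrw]
    have ha : (0:ℝ) < v / (η * c) := by positivity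
    have hb : (0:ℝ) < (1 - μₚ + v) / ((1 - η) * c) := by positivity
    have hsum : η * (v / (η * c)) + (1 - η) * ((1 - μₚ + v) / ((1 - η) * c)) ≤ 1 := by
      have heq : η * (v / (η * c)) + (1 - η) * ((1 - μₚ + v) / ((1 - η) * c))
          = (1 - μₚ + 2 * v) / c := by field_simp; ring
      rw [heq, div_le_one hcpos]
      simp only [hc]
      linarith
    have ha1 : v / (η * c) ≠ 1 := by
      intro h
      have : v = η * c := by field_simp at h; linarith
      linarith
    have hla : Real.log (v / (η * c)) = Real.log v - Real.log (η * c) :=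
      Real.log_div hv0.ne' hwpos.ne'
    have hlb : Real.log ((1 - μₚ + v) / ((1 - η) * c))
        = Real.log (1 - μₚ + v) - Real.log ((1 - η) * c) :=
      Real.log_div hcv.ne' hupos.ne'
    have hlt := aux_lt η _ _ hη0 hη1 ha hb hsum ha1
    rw [hla, hlb] at hlt
    refine ⟨by linarith, ?_, fun h => absurd h (by intro h; linarith)⟩
    intro heq
    exfalso
    linarith
end

section
/- Let μₚ ∈ (0,1) and η ∈ (0,1) with η·(1 + μₚ) ≤ μₚ. Then for every η̂ ∈ (0, 1 + μₚ), the PU-learning reward satisfies η·ln(η̂) + (1 - η)·ln(1 - |η̂ - μₚ|) ≤ η·ln(μₚ), with equality if and only if η̂ = μₚ. -/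
open Set Real

/-- Maximum reward in PU learning, branch `η * (1 + μₚ) ≤ μₚ`: for every
prediction `v ∈ (0, 1 + μₚ)`, the reward
`η * ln v + (1 - η) * ln (1 - |v - μₚ|)` is at most `η * ln μₚ`,
with equality if and only if `v = μₚ`. -/
theorem stmt_11 (μₚ η : ℝ) (hμ : μₚ ∈ Ioo (0:ℝ) 1) (hη : η ∈ Ioo (0:ℝ) 1)
    (hle : η * (1 + μₚ) ≤ μₚ) :
    ∀ v ∈ Ioo (0:ℝ) (1 + μₚ),
      η * Real.log v + (1 - η) * Real.log (1 - |v - μₚ|) ≤ η * Real.log μₚ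
      ∧ (η * Real.log v + (1 - η) * Real.log (1 - |v - μₚ|) = η * Real.log μₚ
          ↔ v = μₚ) := by
  obtain ⟨hμ0, hμ1⟩ := hμ
  obtain ⟨hη0, hη1⟩ := hη
  intro v hv
  obtain ⟨hv0, hv1⟩ := hv
  have habs : |v - μₚ| < 1 := by
    rw [abs_lt]; constructor <;> linarith
  have hpos : (0:ℝ) < 1 - |v - μₚ| := by linarith
  have key : v ≠ μₚ →
      η * Real.log v + (1 - η) * Real.log (1 - |v - μₚ|) < η * Real.log μₚ := by
    intro hne
    have hdiv : v / μₚ ≠ 1 := by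
      intro h
      apply hne
      field_simp at h
      linarith
    have h2 : Real.log (v / μₚ) < v / μₚ - 1 :=
      Real.log_lt_sub_one_of_pos (by positivity) hdiv
    have h2' : μₚ * Real.log (v / μₚ) < v - μₚ := by
      have := (mul_lt_mul_iff_right₀ hμ0).mpr h2
      have heq : μₚ * (v / μₚ - 1) = v - μₚ := by field_simp
      linarith [heq ▸ this]
    have h3 : Real.log (1 - |v - μₚ|) ≤ -|v - μₚ| := by
      have := Real.log_le_sub_one_of_pos hpos
      linarith
    have hlogdiv : Real.log (v / μₚ) = Real.log v - Real.log μₚ :=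
      Real.log_div (ne_of_gt hv0) (ne_of_gt hμ0)
    -- linear part: η*(v-μₚ) ≤ (1-η)*μₚ*|v-μₚ|
    have hlin : η * (v - μₚ) ≤ (1 - η) * μₚ * |v - μₚ| := by
      rcases abs_cases (v - μₚ) with ⟨h, h'⟩ | ⟨h, h'⟩
      · rw [h]; nlinarith
      · rw [h]; nlinarith
    -- combine, multiplied by μₚ
    have hmain : μₚ * (η * Real.log v + (1 - η) * Real.log (1 - |v - μₚ|))
        < μₚ * (η * Real.log μₚ) := by
      have e1 : η * (μₚ * Real.log (v / μₚ)) < η * (v - μₚ) :=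
        (mul_lt_mul_iff_right₀ hη0).mpr h2'
      have e2 : (1 - η) * μₚ * Real.log (1 - |v - μₚ|) ≤ (1 - η) * μₚ * (-|v - μₚ|) := by
        apply mul_le_mul_of_nonneg_left h3
        nlinarith
      rw [hlogdiv] at e1
      nlinarith
    exact lt_of_mul_lt_mul_left hmain (le_of_lt hμ0)
  by_cases hv : v = μₚ
  · subst hv
    simp
  · refine ⟨le_of_lt (key hv), ?_⟩
    constructor
    · intro h; exact absurd h (ne_of_lt (key hv))
    · intro h; exact absurd h hv
end

section
/- Let n be a positive natural number, let F be a nonempty finite set of vectors in ℝⁿ, and let φ : ℝ → ℝ be Lipschitz continuous with constant L ≥ 0 and satisfy φ(0) = 0. Then the Rademacher average of the composed class is bounded by L times that of F: (1/2ⁿ)·∑_{σ ∈ {-1,1}ⁿ} max_{f ∈ F} ∑_{i=1}^{n} σᵢ·φ(fᵢ) ≤ L · (1/2ⁿ)·∑_{σ ∈ {-1,1}ⁿ} max_{f ∈ F} ∑_{i=1}^{n} σᵢ·fᵢ. -/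
open Finset

lemma key_step' {α : Type*} (F : Finset α) (hF : F.Nonempty) (u c : α → ℝ)
    (φ : ℝ → ℝ) (L : ℝ)
    (hlip : ∀ a b : ℝ, |φ a - φ b| ≤ L * |a - b|) :
    F.sup' hF (fun f => φ (u f) + c f) + F.sup' hF (fun f => -φ (u f) + c f)
      ≤ F.sup' hF (fun f => L * u f + c f) + F.sup' hF (fun f => -(L * u f) + c f) := by
  obtain ⟨f, hf, hfe⟩ := F.exists_mem_eq_sup' hF (fun f => φ (u f) + c f)
  obtain ⟨g, hg, hge⟩ := F.exists_mem_eq_sup' hF (fun f => -φ (u f) + c f)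
  rw [hfe, hge]
  have hd : φ (u f) - φ (u g) ≤ L * |u f - u g| := le_trans (le_abs_self _) (hlip _ _)
  rcases le_total (u g) (u f) with h | h
  · have h1 : φ (u f) + c f + (-φ (u g) + c g)
        ≤ (L * u f + c f) + (-(L * u g) + c g) := by
      rw [abs_of_nonneg (by linarith)] at hd
      linarith
    exact h1.trans (add_le_add (le_sup' (fun f => L * u f + c f) hf)
      (le_sup' (fun f => -(L * u f) + c f) hg))
  · have h1 : φ (u f) + c f + (-φ (u g) + c g)
        ≤ (-(L * u f) + c f) + (L * u g + c g) := by
      rw [abs_of_nonpos (by linarith)] at hd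
      linarith
    refine h1.trans ?_
    rw [add_comm (F.sup' hF fun f => L * u f + c f)]
    exact add_le_add (le_sup' (fun f => -(L * u f) + c f) hf)
      (le_sup' (fun f => L * u f + c f) hg)

/-- Ledoux–Talagrand contraction for the empirical Rademacher average:
for a nonempty finite class `F` of vectors in `ℝⁿ` and `φ : ℝ → ℝ` Lipschitz
with constant `L ≥ 0` and `φ 0 = 0`, averaging over all sign vectors
(encoded by `σ : Fin n → Bool`, with `true ↦ 1` and `false ↦ -1`),
`(1/2ⁿ) ∑_σ max_{f ∈ F} ∑ i, σᵢ * φ (fᵢ) ≤ L * (1/2ⁿ) ∑_σ max_{f ∈ F} ∑ i, σᵢ * fᵢ`. -/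
theorem stmt_14 (n : ℕ) (hn : 0 < n) (F : Finset (Fin n → ℝ)) (hF : F.Nonempty)
    (φ : ℝ → ℝ) (L : ℝ) (hL : 0 ≤ L)
    (hlip : ∀ a b : ℝ, |φ a - φ b| ≤ L * |a - b|) (hφ0 : φ 0 = 0) :
    (1 / 2 ^ n) * ∑ σ : Fin n → Bool,
        F.sup' hF (fun f => ∑ i, (if σ i then (1:ℝ) else -1) * φ (f i))
      ≤ L * ((1 / 2 ^ n) * ∑ σ : Fin n → Bool,
        F.sup' hF (fun f => ∑ i, (if σ i then (1:ℝ) else -1) * f i)) := by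
  set s : (Fin n → Bool) → Fin n → ℝ := fun σ i => if σ i then (1:ℝ) else -1 with hs
  set h : ℕ → (Fin n → ℝ) → Fin n → ℝ :=
    fun k f i => if (i : ℕ) < k then L * f i else φ (f i) with hh
  set G : ℕ → (Fin n → Bool) → ℝ :=
    fun k σ => F.sup' hF (fun f => ∑ i, s σ i * h k f i) with hG
  set S : ℕ → ℝ := fun k => ∑ σ : Fin n → Bool, G k σ with hS
  -- step
  have hstep : ∀ k, S k ≤ S (k + 1) := by
    intro k
    by_cases hk : k < n
    · set kk : Fin n := ⟨k, hk⟩ with hkk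
      set flip : (Fin n → Bool) → Fin n → Bool :=
        fun σ => Function.update σ kk (!σ kk) with hflipdef
      have hinv : Function.Involutive flip := by
        intro σ
        funext i
        rcases eq_or_ne i kk with rfl | hi
        · simp [flip, Function.update_self]
        · simp [flip, Function.update_of_ne hi]
      have hsumflip : ∀ m, ∑ σ : Fin n → Bool, G m (flip σ) = ∑ σ : Fin n → Bool, G m σ :=
        fun m => Fintype.sum_bijective flip hinv.bijective _ _ (fun σ => rfl)
      -- pointwise pair inequality
      have hpair : ∀ σ : Fin n → Bool,
          G k σ + G k (flip σ) ≤ G (k+1) σ + G (k+1) (flip σ) := by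
        intro σ
        -- decompose sums
        have hsplit : ∀ (m : ℕ) (τ : Fin n → Bool) (f : Fin n → ℝ),
            ∑ i, s τ i * h m f i = s τ kk * h m f kk + ∑ i ∈ {kk}ᶜ, s τ i * h m f i :=
          fun m τ f => Fintype.sum_eq_add_sum_compl kk _
        set c : (Fin n → ℝ) → ℝ := fun f => ∑ i ∈ {kk}ᶜ, s σ i * h k f i with hc
        have hcongr : ∀ (m : ℕ) (τ : Fin n → Bool), (τ = σ ∨ τ = flip σ) → (m = k ∨ m = k + 1) →
            ∀ f, ∑ i ∈ {kk}ᶜ, s τ i * h m f i = c f := by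
          intro m τ hτ hm f
          refine Finset.sum_congr rfl fun i hi => ?_
          have hine : i ≠ kk := by simpa using hi
          have hτi : τ i = σ i := by
            rcases hτ with rfl | rfl
            · rfl
            · simp [flip, Function.update_of_ne hine]
          have hvne : (i : ℕ) ≠ k := fun hv => hine (Fin.ext hv)
          have hmi : h m f i = h k f i := by
            rcases hm with rfl | rfl
            · rfl
            · simp only [h]
              have : (i : ℕ) < k + 1 ↔ (i : ℕ) < k := by omega
              rw [if_congr this rfl rfl]
          have hsi : s τ i = s σ i := by simp only [s, hτi]
          rw [hsi, hmi]
        have hGk : ∀ τ, (τ = σ ∨ τ = flip σ) →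
            G k τ = F.sup' hF (fun f => s τ kk * φ (f kk) + c f) := by
          intro τ hτ
          apply Finset.sup'_congr _ rfl
          intro f _
          rw [hsplit k τ f, hcongr k τ hτ (Or.inl rfl)]
          simp [h, hkk]
        have hGk1 : ∀ τ, (τ = σ ∨ τ = flip σ) →
            G (k+1) τ = F.sup' hF (fun f => s τ kk * (L * f kk) + c f) := by
          intro τ hτ
          apply Finset.sup'_congr _ rfl
          intro f _
          rw [hsplit (k+1) τ f, hcongr (k+1) τ hτ (Or.inr rfl)]
          simp [h, hkk]
        have hsf : s (flip σ) kk = - s σ kk := by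
          simp only [s, flip, Function.update_self]
          cases σ kk <;> norm_num
        rw [hGk σ (Or.inl rfl), hGk (flip σ) (Or.inr rfl),
            hGk1 σ (Or.inl rfl), hGk1 (flip σ) (Or.inr rfl), hsf]
        rcases Bool.eq_false_or_eq_true (σ kk) with hb | hb
        · have hsv : s σ kk = 1 := by simp [s, hb]
          rw [hsv]
          simp only [neg_neg, one_mul, neg_one_mul]
          exact key_step' F hF (fun f => f kk) c φ L hlip
        · have hsv : s σ kk = -1 := by simp [s, hb]
          rw [hsv]
          simp only [neg_neg, one_mul, neg_one_mul]
          rw [add_comm (F.sup' hF fun f => -φ (f kk) + c f),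
              add_comm (F.sup' hF fun f => -(L * f kk) + c f)]
          exact key_step' F hF (fun f => f kk) c φ L hlip
      have h2 : 2 * S k ≤ 2 * S (k+1) := by
        have e1 : 2 * S k = ∑ σ : Fin n → Bool, (G k σ + G k (flip σ)) := by
          rw [Finset.sum_add_distrib, hsumflip k]; ring
        have e2 : 2 * S (k+1) = ∑ σ : Fin n → Bool, (G (k+1) σ + G (k+1) (flip σ)) := by
          rw [Finset.sum_add_distrib, hsumflip (k+1)]; ring
        rw [e1, e2]
        exact Finset.sum_le_sum fun σ _ => hpair σ
      linarith
    · have : S k = S (k+1) := by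
        apply Finset.sum_congr rfl
        intro σ _
        apply Finset.sup'_congr _ rfl
        intro f _
        apply Finset.sum_congr rfl
        intro i _
        have h1 : (i : ℕ) < k := lt_of_lt_of_le i.isLt (le_of_not_gt hk)
        simp only [h, if_pos h1, if_pos (Nat.lt_succ_of_lt h1)]
      exact this.le
  have hmono : ∀ k, S 0 ≤ S k := by
    intro k
    induction k with
    | zero => exact le_rfl
    | succ m ih => exact ih.trans (hstep m)
  have hS0 : S 0 = ∑ σ : Fin n → Bool,
      F.sup' hF (fun f => ∑ i, s σ i * φ (f i)) := by
    apply Finset.sum_congr rfl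
    intro σ _
    apply Finset.sup'_congr _ rfl
    intro f _
    apply Finset.sum_congr rfl
    intro i _
    simp [h]
  have hSn : S n = L * ∑ σ : Fin n → Bool,
      F.sup' hF (fun f => ∑ i, s σ i * f i) := by
    rw [Finset.mul_sum]
    apply Finset.sum_congr rfl
    intro σ _
    have e1 : G n σ = F.sup' hF (fun f => L * ∑ i, s σ i * f i) := by
      apply Finset.sup'_congr _ rfl
      intro f _
      rw [Finset.mul_sum]
      apply Finset.sum_congr rfl
      intro i _
      simp only [h, if_pos i.isLt]
      ring
    rw [e1]
    apply le_antisymm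
    · apply Finset.sup'_le
      intro f hf
      exact mul_le_mul_of_nonneg_left (Finset.le_sup' (fun f => ∑ i, s σ i * f i) hf) hL
    · obtain ⟨g, hg, hge⟩ := F.exists_mem_eq_sup' hF (fun f => ∑ i, s σ i * f i)
      rw [hge]
      exact Finset.le_sup' (fun f => L * ∑ i, s σ i * f i) hg
  have hfinal := hmono n
  rw [hS0, hSn] at hfinal
  have hpos : (0:ℝ) ≤ 1 / 2 ^ n := by positivity
  have hgoal : (1 / 2 ^ n : ℝ) * ∑ σ : Fin n → Bool,
        F.sup' hF (fun f => ∑ i, s σ i * φ (f i))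
      ≤ L * ((1 / 2 ^ n) * ∑ σ : Fin n → Bool,
        F.sup' hF (fun f => ∑ i, s σ i * f i)) := by
    calc (1 / 2 ^ n : ℝ) * ∑ σ : Fin n → Bool,
          F.sup' hF (fun f => ∑ i, s σ i * φ (f i))
        ≤ (1 / 2 ^ n) * (L * ∑ σ : Fin n → Bool,
          F.sup' hF (fun f => ∑ i, s σ i * f i)) :=
          mul_le_mul_of_nonneg_left hfinal hpos
      _ = _ := by ring
  exact hgoal
end
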